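/- Let μ be a Gaussian measure on a separable Banach space W, with covariance form q(f,g) = ∫_W f(x)·g(x) μ(dx) for f, g ∈ W*, and assume μ is non-degenerate, i.e. q(f,f) = 0 implies f = 0. If W* is complete with respect to the norm f ↦ √(q(f,f)) (equivalently, W* is a closed subspace of L²(W, μ)), then W is finite-dimensional. -/

import Mathlib

open MeasureTheory ProbabilityTheory Filter
open scoped NNReal ENNReal Topology

/-!
By Fernique's theorem the embedding `J : W* → L²(μ)` is continuous; the completeness hypothesis
makes its range closed, so by the open mapping theorem `J` is an isomorphism onto a Hilbert space
`H` and every evaluation `f ↦ f x` is a bounded functional on `H`. If `W` were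
infinite-dimensional, `H` would contain an orthonormal sequence `J φₙ`. By Bessel's inequality
`φₙ x → 0` for every `x`, while every `φₙ` has law `N(0, 1)`: impossible, since a sequence of
random variables with a common law converging pointwise to `0` has law `δ₀`.
-/

/-- A Borel probability measure on a separable Banach space is Gaussian if every
continuous linear functional, viewed as a random variable, has a centered Gaussian
distribution (possibly degenerate, i.e. a Dirac mass at `0`). -/
def IsGaussianMeasure {W : Type*} [NormedAddCommGroup W] [NormedSpace ℝ W]
    [MeasurableSpace W] (μ : Measure W) : Prop :=
  IsProbabilityMeasure μ ∧ ∀ f : W →L[ℝ] ℝ, ∃ v : ℝ≥0, μ.map f = gaussianReal 0 v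

open InnerProductSpace in
theorem exists_orthonormal_nat_of_not_finiteDimensional {𝕜 E : Type*} [RCLike 𝕜]
    [NormedAddCommGroup E] [InnerProductSpace 𝕜 E] (h : ¬ FiniteDimensional 𝕜 E) :
    ∃ e : ℕ → E, Orthonormal 𝕜 e := by
  set b := Module.Basis.ofVectorSpace 𝕜 E
  have hinf : (Module.Basis.ofVectorSpaceIndex 𝕜 E).Infinite := fun hfin ↦
    have := hfin.fintype
    h (.of_basis b)
  let ι := hinf.natEmbedding
  exact ⟨gramSchmidtNormed 𝕜 (b ∘ ι),
    gramSchmidtNormed_orthonormal (b.linearIndependent.comp ι ι.injective)⟩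

theorem Orthonormal.tendsto_dual_apply_zero {𝕜 E : Type*} [RCLike 𝕜] [NormedAddCommGroup E]
    [InnerProductSpace 𝕜 E] [CompleteSpace E] {e : ℕ → E} (he : Orthonormal 𝕜 e)
    (ℓ : StrongDual 𝕜 E) : Tendsto (fun n ↦ ℓ (e n)) atTop (𝓝 0) := by
  set y := (InnerProductSpace.toDual 𝕜 E).symm ℓ
  have hnorm : ∀ n, ‖ℓ (e n)‖ = √(‖inner 𝕜 (e n) y‖ ^ 2) := fun n ↦ by
    rw [Real.sqrt_sq (norm_nonneg _), norm_inner_symm, InnerProductSpace.toDual_symm_apply]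
  rw [tendsto_zero_iff_norm_tendsto_zero]
  simpa only [hnorm, Real.sqrt_zero] using (he.inner_products_summable y).tendsto_atTop_zero.sqrt

theorem eq_dirac_zero_of_map_eq_of_tendsto_zero {Ω : Type*} [MeasurableSpace Ω]
    {μ : Measure Ω} [IsProbabilityMeasure μ] {X : ℕ → Ω → ℝ} (hX : ∀ n, AEMeasurable (X n) μ)
    {ν : Measure ℝ} (hlaw : ∀ n, μ.map (X n) = ν)
    (hlim : ∀ᵐ ω ∂μ, Tendsto (X · ω) atTop (𝓝 0)) :
    ν = Measure.dirac 0 := by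
  have : IsProbabilityMeasure ν := hlaw 0 ▸ Measure.isProbabilityMeasure_map (hX 0)
  refine Measure.ext_of_charFun (funext fun t ↦ ?_)
  have hexp : Continuous fun y : ℝ ↦ Complex.exp (t * y * Complex.I) := by fun_prop
  have hconst : ∀ n, ∫ ω, Complex.exp (t * X n ω * Complex.I) ∂μ = charFun ν t := fun n ↦ by
    rw [← hlaw n, charFun_apply_real, integral_map (hX n) hexp.aestronglyMeasurable]
  have hconv : Tendsto (fun n ↦ ∫ ω, Complex.exp (t * X n ω * Complex.I) ∂μ) atTop
      (𝓝 (∫ _, Complex.exp (t * 0 * Complex.I) ∂μ)) := by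
    refine tendsto_integral_of_dominated_convergence (fun _ ↦ 1)
      (fun n ↦ (hexp.measurable.comp_aemeasurable (hX n)).aestronglyMeasurable)
      (integrable_const _) (fun n ↦ ae_of_all _ fun ω ↦ ?_) ?_
    · rw [← Complex.ofReal_mul, Complex.norm_exp_ofReal_mul_I]
    · filter_upwards [hlim] with ω hω
      exact (hexp.tendsto 0).comp hω
  simp_rw [hconst] at hconv
  simpa using tendsto_nhds_unique tendsto_const_nhds hconv

theorem integral_sq_eq_of_map_eq_gaussianReal {Ω : Type*} [MeasurableSpace Ω] {μ : Measure Ω}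
    {X : Ω → ℝ} (hX : AEMeasurable X μ) {v : ℝ≥0} (h : μ.map X = gaussianReal 0 v) :
    ∫ ω, X ω ^ 2 ∂μ = v := calc
  _ = ∫ y, y ^ 2 ∂(μ.map X) := (integral_map hX (by fun_prop)).symm
  _ = v := by
    rw [h, ← variance_of_integral_eq_zero aemeasurable_id' integral_id_gaussianReal,
      variance_fun_id_gaussianReal]

namespace StrongDual

variable {E : Type*} [NormedAddCommGroup E] [NormedSpace ℝ E] [MeasurableSpace E]
  [OpensMeasurableSpace E] {μ : Measure E}

theorem norm_toLp_two_sq (h : MemLp id 2 μ) (L : StrongDual ℝ E) :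
    ‖L.toLp μ 2‖ ^ 2 = ∫ x, L x ^ 2 ∂μ := by
  rw [← real_inner_self_eq_norm_sq]
  have := uncenteredCovarianceBilinDual_apply h L L
  simp only [uncenteredCovarianceBilinDual, ContinuousLinearMap.bilinearComp_apply] at this
  simpa [pow_two] using this

theorem dist_toLp_two (h : MemLp id 2 μ) (L L' : StrongDual ℝ E) :
    dist (L.toLp μ 2) (L'.toLp μ 2) = √(∫ x, (L x - L' x) ^ 2 ∂μ) := by
  rw [dist_eq_norm, ← map_sub, ← Real.sqrt_sq (norm_nonneg _), norm_toLp_two_sq h]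
  rfl

theorem toLp_injective (h : MemLp id 2 μ)
    (hnd : ∀ L : StrongDual ℝ E, ∫ x, L x ^ 2 ∂μ = 0 → L = 0) :
    Function.Injective (toLp μ 2 : StrongDual ℝ E →L[ℝ] Lp ℝ 2 μ) :=
  (injective_iff_map_eq_zero _).mpr fun L hL ↦ hnd L <| by
    rw [← norm_toLp_two_sq h, hL, norm_zero, sq, zero_mul]

theorem isClosed_range_toLp (h : MemLp id 2 μ)
    (hcomplete : ∀ f : ℕ → StrongDual ℝ E,
      (∀ ε > (0 : ℝ), ∃ N, ∀ m ≥ N, ∀ n ≥ N, ∫ x, (f m x - f n x) ^ 2 ∂μ < ε) →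
      ∃ g : StrongDual ℝ E, Tendsto (fun n ↦ ∫ x, (f n x - g x) ^ 2 ∂μ) atTop (𝓝 0)) :
    IsClosed (Set.range (toLp μ 2 : StrongDual ℝ E →L[ℝ] Lp ℝ 2 μ)) := by
  refine IsSeqClosed.isClosed fun u y hu hlim ↦ ?_
  choose f hf using hu
  obtain rfl : u = fun n ↦ toLp μ 2 (f n) := funext fun n ↦ (hf n).symm
  obtain ⟨g, hg⟩ := hcomplete f fun ε hε ↦ by
    obtain ⟨N, hN⟩ := Metric.cauchySeq_iff.mp hlim.cauchySeq (√ε) (Real.sqrt_pos.mpr hε)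
    refine ⟨N, fun m hm n hn ↦ ?_⟩
    have := hN m hm n hn
    rwa [dist_toLp_two h, Real.sqrt_lt_sqrt_iff (integral_nonneg fun _ ↦ sq_nonneg _)] at this
  refine ⟨g, tendsto_nhds_unique ?_ hlim⟩
  rw [tendsto_iff_dist_tendsto_zero]
  simpa only [dist_toLp_two h, Real.sqrt_zero] using hg.sqrt

end StrongDual

/-- If `μ` is a non-degenerate Gaussian measure on a separable Banach space `W`
(the covariance form `q(f,f) = ∫ (f x)² dμ` vanishes only for `f = 0`), and `W*` is
complete in the norm `f ↦ √(q(f,f))` induced by `L²(W,μ)` (i.e. every `L²(μ)`-Cauchy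
sequence in `W*` converges in `L²(μ)` to an element of `W*`), then `W` is
finite-dimensional. -/
theorem finiteDimensional_of_dual_complete_in_L2
    {W : Type*} [NormedAddCommGroup W] [NormedSpace ℝ W] [CompleteSpace W]
    [SecondCountableTopology W] [MeasurableSpace W] [BorelSpace W]
    (μ : Measure W) (hμ : IsGaussianMeasure μ)
    (hnd : ∀ f : W →L[ℝ] ℝ, ∫ x, (f x) ^ 2 ∂μ = 0 → f = 0)
    (hcomplete : ∀ f : ℕ → W →L[ℝ] ℝ,
      (∀ ε > (0 : ℝ), ∃ N, ∀ m ≥ N, ∀ n ≥ N, ∫ x, (f m x - f n x) ^ 2 ∂μ < ε) →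
      ∃ g : W →L[ℝ] ℝ, Tendsto (fun n => ∫ x, (f n x - g x) ^ 2 ∂μ) atTop (𝓝 0)) :
    FiniteDimensional ℝ W := by
  obtain ⟨-, hlaw⟩ := hμ
  have : IsGaussian μ := isGaussian_of_map_eq_gaussianReal fun L ↦ ⟨0, hlaw L⟩
  have h2 : MemLp id 2 μ := IsGaussian.memLp_two_id
  set J : StrongDual ℝ W →L[ℝ] Lp ℝ 2 μ := StrongDual.toLp μ 2
  have hclosed := StrongDual.isClosed_range_toLp h2 hcomplete
  have : CompleteSpace J.range := hclosed.completeSpace_coe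
  let e := J.equivRange (StrongDual.toLp_injective h2 hnd) hclosed
  by_contra hW
  have hH : ¬ FiniteDimensional ℝ J.range := fun hH ↦ hW <|
    have := e.symm.toLinearEquiv.finiteDimensional
    .of_injective (NormedSpace.inclusionInDoubleDualLi ℝ).toLinearMap
      (NormedSpace.inclusionInDoubleDualLi ℝ).injective
  obtain ⟨ψ, hψ⟩ := exists_orthonormal_nat_of_not_finiteDimensional hH
  set φ : ℕ → StrongDual ℝ W := fun n ↦ e.symm (ψ n)
  have hlim : ∀ x, Tendsto (φ · x) atTop (𝓝 0) := fun x ↦ hψ.tendsto_dual_apply_zero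
    ((NormedSpace.inclusionInDoubleDual ℝ W x).comp e.symm.toContinuousLinearMap)
  have hφ : ∀ n, μ.map (φ n) = gaussianReal 0 1 := fun n ↦ by
    obtain ⟨v, hv⟩ := hlaw (φ n)
    have hJφ : ‖J (φ n)‖ = 1 := by
      rw [← hψ.1 n, ← e.apply_symm_apply (ψ n)]
      rfl
    have : (v : ℝ) = 1 := by
      rw [← integral_sq_eq_of_map_eq_gaussianReal (by fun_prop) hv,
        ← StrongDual.norm_toLp_two_sq h2, hJφ, one_pow]
    rwa [show v = 1 from mod_cast this] at hv
  have hδ := eq_dirac_zero_of_map_eq_of_tendsto_zero (fun n ↦ (φ n).continuous.aemeasurable) hφ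
    (ae_of_all _ hlim)
  simpa [hδ] using variance_fun_id_gaussianReal (μ := 0) (v := 1)
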